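/- Let G be a monoid acting on a set X and let φ be a special filter on X with ⋂φ = {x_0}, and let τ_φ consist of all sets U⊆X such that for every g∈G with g•x_0∈U the preimage {x∈X : g•x∈U} belongs to φ. Then the character of τ_φ at x_0 is at least the character of φ: the least cardinality of a neighborhood base at x_0 in (X, τ_φ) is at least the least cardinality of a filter base of φ. -/

import Mathlib

open Topology Cardinal

universe u

/-- An injective transfinite sequence `(x_α)_{α<κ}` of points of a `G`-act `X` is *special*
(with least index `i₀`) if there is an enumeration `G = {g_α}_{α<κ}` of the monoid `G` such
that for all `α < κ` and all `β, γ, δ < α`: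
(1) if `g_β • x_{i₀} ≠ g_γ • x_{i₀}` then `g_β • x_α ≠ g_γ • x_α`, and
(2) if `g_β • x_{i₀} ≠ g_γ • x_δ` then `g_β • x_α ≠ g_γ • x_δ`. -/
def IsSpecialSeq (G : Type u) {X : Type u} [Monoid G] [MulAction G X] (κ : Cardinal.{u})
    (x : κ.ord.ToType → X) (i₀ : κ.ord.ToType) : Prop :=
  (∀ i, i₀ ≤ i) ∧ Function.Injective x ∧
  ∃ g : κ.ord.ToType → G, Function.Surjective g ∧
    ∀ α β γ δ : κ.ord.ToType, β < α → γ < α → δ < α →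
      (g β • x i₀ ≠ g γ • x i₀ → g β • x α ≠ g γ • x α) ∧
      (g β • x i₀ ≠ g γ • x δ → g β • x α ≠ g γ • x δ)

/-- A filter `φ` on a `G`-act `X` is *special* (with `⋂ φ = {x₀}`) if for some cardinal `κ`
there is a special sequence `(x_α)_{α<κ}` in `X` with first term `x₀` such that
`⋂ φ = {x₀}` and `{x₀} ∪ {x_β : α < β < κ} ∈ φ` for all `α < κ`. -/
def IsSpecialFilter (G : Type u) {X : Type u} [Monoid G] [MulAction G X]
    (φ : Filter X) (x₀ : X) : Prop :=
  ∃ (κ : Cardinal.{u}) (x : κ.ord.ToType → X) (i₀ : κ.ord.ToType),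
    IsSpecialSeq G κ x i₀ ∧ x i₀ = x₀ ∧ ⋂₀ φ.sets = {x₀} ∧
    ∀ α : κ.ord.ToType, insert x₀ (x '' Set.Ioi α) ∈ φ

/-- The topology `τ_φ`. -/
def tauPhi (G X : Type*) [Monoid G] [MulAction G X] (x₀ : X) (φ : Filter X) :
    TopologicalSpace X where
  IsOpen U := ∀ g : G, g • x₀ ∈ U → {x : X | g • x ∈ U} ∈ φ
  isOpen_univ := fun _ _ => Filter.univ_mem' fun _ => trivial
  isOpen_inter := fun U V hU hV g hg =>
    Filter.inter_mem (hU g hg.1) (hV g hg.2)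
  isOpen_sUnion := fun S hS g hg => by
    obtain ⟨t, htS, hgt⟩ := hg
    exact Filter.mem_of_superset (hS t htS g hgt) fun x hx => ⟨t, htS, hx⟩

/-!
Let `(x_α)` be the special sequence of `φ` and `R` its range, which lies in `φ`. Every
`τ_φ`-open neighbourhood of `x₀` lies in `φ`, and conversely for each `F ∈ φ` the set
`F ∪ Rᶜ` is `τ_φ`-open: if `g_β • x_α = x_μ` for large `α`, condition (2) of specialness
forces either `μ = α` or `g_β • x₀ = x_μ`, so membership in `F` propagates. Hence `φ` is the
trace of the neighbourhood filter of `x₀` on `R`, and intersecting a neighbourhood base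
with `R` gives a base of `φ` of no larger cardinality.
-/

section Character

variable {X : Type u}

noncomputable def Filter.character (φ : Filter X) : Cardinal.{u} :=
  sInf {c | ∃ 𝓕 : Set (Set X), 𝓕 ⊆ φ.sets ∧ (∀ F ∈ φ, ∃ E ∈ 𝓕, E ⊆ F) ∧ #𝓕 = c}

noncomputable def nhdsCharacter (t : TopologicalSpace X) (x : X) : Cardinal.{u} :=
  sInf {c | ∃ 𝓑 : Set (Set X), (∀ B ∈ 𝓑, IsOpen[t] B ∧ x ∈ B) ∧
    (∀ U : Set X, IsOpen[t] U → x ∈ U → ∃ B ∈ 𝓑, B ⊆ U) ∧ #𝓑 = c}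

/-- The hypotheses say that `φ` is the trace on `R` of the neighbourhood filter of `x`. -/
theorem Filter.character_le_nhdsCharacter (t : TopologicalSpace X) (φ : Filter X) (x : X)
    {R : Set X} (hR : R ∈ φ) (hmem : ∀ U, IsOpen[t] U → x ∈ U → U ∈ φ)
    (hbase : ∀ F ∈ φ, ∃ U, IsOpen[t] U ∧ x ∈ U ∧ U ∩ R ⊆ F) :
    φ.character ≤ nhdsCharacter t x := by
  refine le_csInf ⟨_, {U | IsOpen[t] U ∧ x ∈ U}, fun _ hU => hU,
    fun U hU hx => ⟨U, ⟨hU, hx⟩, subset_rfl⟩, rfl⟩ ?_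
  rintro _ ⟨𝓑, h𝓑, hbase𝓑, rfl⟩
  unfold Filter.character
  refine (csInf_le' ?_).trans (mk_image_le (f := (· ∩ R)))
  refine ⟨_, ?_, ?_, rfl⟩
  · rintro _ ⟨B, hB, rfl⟩
    exact Filter.inter_mem (hmem B (h𝓑 B hB).1 (h𝓑 B hB).2) hR
  · intro F hF
    obtain ⟨U, hUo, hxU, hUF⟩ := hbase F hF
    obtain ⟨B, hB, hBU⟩ := hbase𝓑 U hUo hxU
    exact ⟨B ∩ R, ⟨B, hB, rfl⟩, (Set.inter_subset_inter_left R hBU).trans hUF⟩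

end Character

section SpecialSequence

variable {G X ι : Type*} [Monoid G] [MulAction G X] [LinearOrder ι]

theorem eq_or_smul_eq_of_smul_eq_of_special {x : ι → X} {g : ι → G} {i₀ e : ι}
    (hx : Function.Injective x) (hi₀e : i₀ ≤ e) (he : g e = 1)
    (hspec : ∀ α β γ δ, β < α → γ < α → δ < α →
      g β • x i₀ ≠ g γ • x δ → g β • x α ≠ g γ • x δ)
    {α β μ : ι} (hβα : β < α) (heα : e < α) (h : g β • x α = x μ) :
    μ = α ∨ g β • x i₀ = x μ := by
  rcases lt_trichotomy μ α with hμα | rfl | hαμ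
  · right
    by_contra hne
    exact hspec α β e μ hβα heα hμα (by rwa [he, one_smul]) (by rwa [he, one_smul])
  · exact Or.inl rfl
  · have hx₀ : x i₀ = g β • x α := by
      by_contra hne
      exact hspec μ e β α (heα.trans hαμ) (hβα.trans hαμ) hαμ (by rwa [he, one_smul])
        (by rw [he, one_smul, h])
    exact absurd (hx (hx₀.trans h)) (hi₀e.trans_lt (heα.trans hαμ)).ne

end SpecialSequence

section TauPhi

variable {G X : Type u} [Monoid G] [MulAction G X]

theorem mem_of_isOpen_tauPhi {φ : Filter X} {x₀ : X} {U : Set X}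
    (hU : IsOpen[tauPhi G X x₀ φ] U) (hx₀ : x₀ ∈ U) : U ∈ φ := by
  simpa using hU 1 (by simpa using hx₀)

theorem IsSpecialSeq.isOpen_tauPhi_union_compl_range {φ : Filter X} {κ : Cardinal.{u}}
    {x : κ.ord.ToType → X} {i₀ : κ.ord.ToType} (hx : IsSpecialSeq G κ x i₀)
    (htail : ∀ α, insert (x i₀) (x '' Set.Ioi α) ∈ φ) {F : Set X} (hF : F ∈ φ) :
    IsOpen[tauPhi G X (x i₀) φ] (F ∪ (Set.range x)ᶜ) := by
  obtain ⟨hmin, hinj, g, hg, hspec⟩ := hx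
  obtain ⟨e, he⟩ := hg 1
  intro h hβ
  obtain ⟨β, rfl⟩ := hg h
  filter_upwards [hF, htail (max β e)] with y hyF hy
  rcases hy with rfl | ⟨α, hα, rfl⟩
  · exact hβ
  · refine or_iff_not_imp_right.2 fun hrange => ?_
    obtain ⟨μ, hμ⟩ := not_not.1 hrange
    rcases eq_or_smul_eq_of_smul_eq_of_special hinj (hmin e) he (fun α β γ δ h₁ h₂ h₃ =>
      (hspec α β γ δ h₁ h₂ h₃).2) (max_lt_iff.1 hα).1 (max_lt_iff.1 hα).2 hμ.symm
      with rfl | hβμ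
    · exact hμ ▸ hyF
    · rw [hβμ] at hβ
      exact hμ ▸ hβ.resolve_right (not_not.2 ⟨μ, rfl⟩)

theorem IsSpecialFilter.exists_trace {φ : Filter X} {x₀ : X} (hφ : IsSpecialFilter G φ x₀) :
    ∃ R ∈ φ, ∀ F ∈ φ, ∃ U, IsOpen[tauPhi G X x₀ φ] U ∧ x₀ ∈ U ∧ U ∩ R ⊆ F := by
  obtain ⟨κ, x, i₀, hx, rfl, hinter, htail⟩ := hφ
  have hrange : Set.range x ∈ φ := by
    refine Filter.mem_of_superset (htail i₀) (Set.insert_subset (Set.mem_range_self _) ?_)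
    exact Set.image_subset_range _ _
  refine ⟨Set.range x, hrange, fun F hF => ⟨_, hx.isOpen_tauPhi_union_compl_range htail hF,
    Or.inl ?_, fun y hy => hy.1.resolve_right (not_not.2 hy.2)⟩⟩
  have hx₀ : x i₀ ∈ ⋂₀ φ.sets := hinter ▸ rfl
  exact hx₀ F hF

end TauPhi

/-- If `φ` is a special filter on a `G`-act `X` with `⋂ φ = {x₀}`, then the character of
`τ_φ` at `x₀` is at least the character of `φ`: the least cardinality of a neighborhood
base at `x₀` in `(X, τ_φ)` is at least the least cardinality of a filter base of `φ`. -/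
theorem tauPhi_character_ge_of_specialFilter {G X : Type u} [Monoid G] [MulAction G X]
    (φ : Filter X) (x₀ : X) (hφ : IsSpecialFilter G φ x₀) :
    sInf {c : Cardinal.{u} | ∃ 𝓕 : Set (Set X), 𝓕 ⊆ φ.sets ∧
        (∀ F ∈ φ, ∃ E ∈ 𝓕, E ⊆ F) ∧ #𝓕 = c} ≤
      sInf {c : Cardinal.{u} | ∃ 𝓑 : Set (Set X),
        (∀ B ∈ 𝓑, IsOpen[tauPhi G X x₀ φ] B ∧ x₀ ∈ B) ∧
        (∀ U : Set X, IsOpen[tauPhi G X x₀ φ] U → x₀ ∈ U → ∃ B ∈ 𝓑, B ⊆ U) ∧ #𝓑 = c} := by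
  obtain ⟨R, hR, hbase⟩ := hφ.exists_trace
  exact Filter.character_le_nhdsCharacter _ φ x₀ hR (fun _ => mem_of_isOpen_tauPhi) hbase
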